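/- Let 0 ≤ k < j ≤ n with k+1 ≤ j, let J(k,j) = {00,...,0k,0j,...,0n,1k,...,1n} ⊂ [n]⋆[n]^op and τ(k,j) = Δ^{J(k,j)}. Define V(k,j+1) as the union of the subcomplex U(k+1) = Ω^n ∪ ⋃_{k+1 ≤ i ≤ n} τ(i,i+1) with ⋃_{j+1 ≤ j' ≤ n+1} τ(k,j'). Then the intersection of τ(k,j) with V(k,j+1) equals the generalized horn Λ^{J(k,j)}_{M(k,j)}, where M(k,j) = {00,...,0k,1(k+1),...,1n} if j = n, and M(k,j) = {00,...,0k,1(k+1),...,1n,0(j+1),...,0n} if k+1 ≤ j < n. -/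

import Mathlib

/-- Vertices of `Δ^{[n]⋆[n]^op}` are identified with `Fin (2n+2)` via `0i ↦ i`,
`1i ↦ 2n+1-i`.  `tauV n k l` is the vertex set of
`τ(k,l) = Δ^{{00,…,0k,0l,…,0n,1k,…,1n}}` (for `l = n+1` this is `σ(k)`). -/
def tauV (n k l : ℕ) : Finset (Fin (2 * n + 2)) :=
  Finset.univ.filter fun v =>
    (v : ℕ) ≤ k ∨ (l ≤ (v : ℕ) ∧ (v : ℕ) ≤ n) ∨
      (n + 1 ≤ (v : ℕ) ∧ (v : ℕ) ≤ 2 * n + 1 - k)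

/-- The vertex set of the face `σ(r) = τ(r, n+1)`. -/
def sigmaV (n r : ℕ) : Finset (Fin (2 * n + 2)) := tauV n r (n + 1)

/-- The vertex set `M(k,j)`: `{00,…,0k,1(k+1),…,1n}` if `j = n`, and additionally
`{0(j+1),…,0n}` if `k+1 ≤ j < n`. -/
def MV (n k j : ℕ) : Finset (Fin (2 * n + 2)) :=
  Finset.univ.filter fun v =>
    (v : ℕ) ≤ k ∨ (j + 1 ≤ (v : ℕ) ∧ (v : ℕ) ≤ n) ∨
      (n + 1 ≤ (v : ℕ) ∧ (v : ℕ) ≤ 2 * n - k)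

/-- Membership in the subcomplex `U(k+1) = Ω^n ∪ ⋃_{k+1 ≤ i ≤ n} τ(i,i+1)`. -/
def memU (n k1 : ℕ) (S : Finset (Fin (2 * n + 2))) : Prop :=
  (∃ r ≤ n, S ⊆ sigmaV n r) ∨ ∃ i, k1 ≤ i ∧ i ≤ n ∧ S ⊆ tauV n i (i + 1)

/-- Membership in the subcomplex `V(k,j1) = U(k+1) ∪ ⋃_{j1 ≤ j' ≤ n+1} τ(k,j')`. -/
def memV (n k j1 : ℕ) (S : Finset (Fin (2 * n + 2))) : Prop :=
  memU n (k + 1) S ∨ ∃ j', j1 ≤ j' ∧ j' ≤ n + 1 ∧ S ⊆ tauV n k j'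

/-- A nonempty subset `S` spans a simplex of `Λ^I_J` iff `S ⊆ I` and `S` omits some
`m ∈ I - J`. -/
def hornMem {α : Type*} [DecidableEq α] (I J S : Finset α) : Prop :=
  S ⊆ I ∧ ∃ m ∈ I \ J, m ∉ S

/-!
`J(k,j) \ M(k,j)` consists of exactly two vertices, `0j` and `1k`, so the horn consists of the
faces of `τ(k,j)` missing `0j` or missing `1k`. A face of `τ(k,j)` missing `0j` lies in
`τ(k,j+1)`, and one missing `1k` lies in `τ(k+1,k+2) ⊆ U(k+1)`. Conversely no face of
`V(k,j+1)` contains both: `σ(r)` would need `j ≤ r ≤ k`, the `τ(i,i+1)` with `i > k` miss `1k`,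
and the `τ(k,j')` with `j' > j` miss `0j`.
-/

lemma mem_tauV {n k l : ℕ} {v : Fin (2 * n + 2)} :
    v ∈ tauV n k l ↔ ((v : ℕ) ≤ k ∨ (l ≤ (v : ℕ) ∧ (v : ℕ) ≤ n) ∨
      (n + 1 ≤ (v : ℕ) ∧ (v : ℕ) ≤ 2 * n + 1 - k)) := by
  simp [tauV]

lemma mem_MV {n k j : ℕ} {v : Fin (2 * n + 2)} :
    v ∈ MV n k j ↔ ((v : ℕ) ≤ k ∨ (j + 1 ≤ (v : ℕ) ∧ (v : ℕ) ≤ n) ∨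
      (n + 1 ≤ (v : ℕ) ∧ (v : ℕ) ≤ 2 * n - k)) := by
  simp [MV]

lemma hornMem_iff_of_sdiff_eq_pair {α : Type*} [DecidableEq α] {I J S : Finset α} {a b : α}
    (h : I \ J = {a, b}) : hornMem I J S ↔ S ⊆ I ∧ (a ∉ S ∨ b ∉ S) := by
  simp [hornMem, h]

/-- The vertex `0i`. -/
def zeroVtx (n i : ℕ) (hi : i ≤ n) : Fin (2 * n + 2) := ⟨i, by omega⟩

/-- The vertex `1i`. -/
def oneVtx (n i : ℕ) : Fin (2 * n + 2) := ⟨2 * n + 1 - i, by omega⟩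

section Vertices

variable {n k j : ℕ}

lemma tauV_sdiff_MV (hk : k < j) (hj : j ≤ n) :
    tauV n k j \ MV n k j = {zeroVtx n j hj, oneVtx n k} := by
  ext v
  simp only [Finset.mem_sdiff, mem_tauV, mem_MV, Finset.mem_insert, Finset.mem_singleton,
    Fin.ext_iff, zeroVtx, oneVtx]
  omega

lemma zeroVtx_mem_sigmaV_iff (hj : j ≤ n) (r : ℕ) : zeroVtx n j hj ∈ sigmaV n r ↔ j ≤ r := by
  simp only [sigmaV, mem_tauV, zeroVtx]
  omega

lemma oneVtx_mem_sigmaV_iff (hk : k ≤ n) {r : ℕ} (hr : r ≤ n) :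
    oneVtx n k ∈ sigmaV n r ↔ r ≤ k := by
  simp only [sigmaV, mem_tauV, oneVtx]
  omega

lemma zeroVtx_notMem_tauV (hj : j ≤ n) {j' : ℕ} (hk : k < j) (hj' : j < j') :
    zeroVtx n j hj ∉ tauV n k j' := by
  simp only [mem_tauV, zeroVtx]
  omega

lemma oneVtx_notMem_tauV {i l : ℕ} (hki : k < i) (hi : i ≤ n) : oneVtx n k ∉ tauV n i l := by
  simp only [mem_tauV, oneVtx]
  omega

lemma subset_tauV_succ_of_zeroVtx_notMem (hj : j ≤ n) {S : Finset (Fin (2 * n + 2))}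
    (hS : S ⊆ tauV n k j) (h0 : zeroVtx n j hj ∉ S) : S ⊆ tauV n k (j + 1) := by
  intro v hv
  have hvj : (v : ℕ) ≠ j := fun h => h0 (by rwa [show zeroVtx n j hj = v from Fin.ext h.symm])
  have := mem_tauV.1 (hS hv)
  rw [mem_tauV]
  omega

lemma subset_tauV_succ_succ_of_oneVtx_notMem {l : ℕ} {S : Finset (Fin (2 * n + 2))}
    (hS : S ⊆ tauV n k l) (h1 : oneVtx n k ∉ S) : S ⊆ tauV n (k + 1) (k + 2) := by
  intro v hv
  have hvk : (v : ℕ) ≠ 2 * n + 1 - k :=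
    fun h => h1 (by rwa [show oneVtx n k = v from Fin.ext h.symm])
  have := mem_tauV.1 (hS hv)
  rw [mem_tauV]
  omega

end Vertices

theorem tau_inter_V_general (n k j : ℕ) (hk : k < j) (hj : j ≤ n)
    (S : Finset (Fin (2 * n + 2))) :
    (S ⊆ tauV n k j ∧ memV n k (j + 1) S) ↔ hornMem (tauV n k j) (MV n k j) S := by
  rw [hornMem_iff_of_sdiff_eq_pair (tauV_sdiff_MV hk hj)]
  refine and_congr_right fun hSτ => ⟨?_, ?_⟩
  · rintro ((⟨r, hr, hσ⟩ | ⟨i, hki, hin, hτ⟩) | ⟨j', hj', -, hτ⟩)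
    · by_contra! h
      have hjr := (zeroVtx_mem_sigmaV_iff hj r).1 (hσ h.1)
      have hrk := (oneVtx_mem_sigmaV_iff (by omega) hr).1 (hσ h.2)
      omega
    · exact Or.inr fun h => oneVtx_notMem_tauV (by omega) hin (hτ h)
    · exact Or.inl fun h => zeroVtx_notMem_tauV hj hk (by omega) (hτ h)
  · rintro (h0 | h1)
    · exact Or.inr ⟨j + 1, le_rfl, by omega, subset_tauV_succ_of_zeroVtx_notMem hj hSτ h0⟩
    · exact Or.inl (Or.inr ⟨k + 1, le_rfl, by omega,
        subset_tauV_succ_succ_of_oneVtx_notMem hSτ h1⟩)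

/-- For `0 ≤ k < j ≤ n`, the intersection of `τ(k,j)` with `V(k,j+1)` equals the
generalized horn `Λ^{J(k,j)}_{M(k,j)}`, as subcomplexes of `Δ^{[n]⋆[n]^op}` (stated as an
equality of the families of vertex sets of simplices). -/
theorem tau_inter_V (n k j : ℕ) (hk : k < j) (hj : j ≤ n)
    (S : Finset (Fin (2 * n + 2))) (hS : S.Nonempty) :
    (S ⊆ tauV n k j ∧ memV n k (j + 1) S) ↔ hornMem (tauV n k j) (MV n k j) S :=
  tau_inter_V_general n k j hk hj S
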